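/- arXiv:2008.02216 — 4 statements merged into one kernel-verified Lean document; each statement's English description precedes it below -/
import Mathlib

section
/- For any ranking r of n items and any other ranking s, the Jaccard curve of (r, s) lies pointwise above the Jaccard curve of (r, rev(r)): for all k, J(r, s, k) ≥ J(r, rev(r), k), where rev(r) is the reversal of r. -/
open Finset Filter
open scoped Classical

noncomputable def rankOf {n : ℕ} (r : Fin n → ℝ) (i : Fin n) : ℕ :=
  (Finset.univ.filter (fun j => r i ≤ r j)).card

noncomputable def topk {n : ℕ} (r : Fin n → ℝ) (k : ℕ) : Finset (Fin n) :=
  Finset.univ.filter (fun i => rankOf r i ≤ k)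

noncomputable def jac {n : ℕ} (r s : Fin n → ℝ) (k : ℕ) : ℝ :=
  ((topk r k ∩ topk s k).card : ℝ) / ((topk r k ∪ topk s k).card : ℝ)

noncomputable def kthScore {n : ℕ} (r : Fin n → ℝ) (k : ℕ) : ℝ :=
  if h : (topk r k).Nonempty then (topk r k).inf' h r else 0

noncomputable def fmu {n : ℕ} (r : Fin n → ℝ) (k : ℕ) (i : Fin n) : ℝ :=
  if i ∈ topk r k then 1 else r i / kthScore r k

noncomputable def fuji {n : ℕ} (r s : Fin n → ℝ) (k : ℕ) : ℝ :=
  (∑ x ∈ topk r k ∪ topk s k, min (fmu r k x) (fmu s k x)) /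
  (∑ x ∈ topk r k ∪ topk s k, max (fmu r k x) (fmu s k x))

/-!
For injective scores every top-`k` set has exactly `k` elements, so for top-`k` sets `A`, `B`
the Jaccard index is `i / (2k - i)` with `i = |A ∩ B|`, an increasing function of `i`.
Inclusion–exclusion inside `n` items forces `|A ∩ B| ≥ 2k - n`, while an item in the top `k`
of both `r` and its reversal has an `r`-rank in `[n + 1 - k, k]`, so `r` and `rev r` meet in
at most `max 0 (2k - n)` items: the reversal attains the smallest possible overlap.
-/

namespace Finset

variable {α : Type*} [DecidableEq α]

theorem card_add_card_sub_card_le_card_inter [Fintype α] (s t : Finset α) :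
    #s + #t - Fintype.card α ≤ #(s ∩ t) := by
  have := card_union_add_card_inter s t
  have := card_le_univ (s ∪ t)
  omega

theorem card_inter_div_card_union_le_of_card_eq {s t u : Finset α} (ht : #t = #s)
    (hu : #u = #s) (h : #(s ∩ t) ≤ #(s ∩ u)) :
    (#(s ∩ t) : ℝ) / #(s ∪ t) ≤ #(s ∩ u) / #(s ∪ u) := by
  rcases s.eq_empty_or_nonempty with rfl | hs
  · simp
  have ht' := card_union_add_card_inter s t
  have hu' := card_union_add_card_inter s u
  have hst : 0 < #(s ∪ t) := hs.mono subset_union_left |>.card_pos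
  have hsu : 0 < #(s ∪ u) := hs.mono subset_union_left |>.card_pos
  rw [div_le_div_iff₀ (by exact_mod_cast hst) (by exact_mod_cast hsu)]
  exact_mod_cast (by nlinarith : #(s ∩ t) * #(s ∪ u) ≤ #(s ∩ u) * #(s ∪ t))

end Finset

section Ranking

variable {n : ℕ} (r : Fin n → ℝ)

theorem one_le_rankOf (i : Fin n) : 1 ≤ rankOf r i :=
  card_pos.mpr ⟨i, by simp⟩

theorem rankOf_le (i : Fin n) : rankOf r i ≤ n := by
  unfold rankOf
  simpa using card_filter_le univ (fun j => r i ≤ r j)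

variable {r}

theorem rankOf_lt_rankOf {i j : Fin n} (h : r i < r j) : rankOf r j < rankOf r i := by
  refine card_lt_card ⟨fun x hx => ?_, fun hsub => ?_⟩
  · simp only [mem_filter, mem_univ, true_and] at hx ⊢
    linarith
  · have := hsub (by simp : i ∈ univ.filter (fun x => r i ≤ r x))
    simp only [mem_filter, mem_univ, true_and] at this
    linarith

theorem rankOf_injective (hr : Function.Injective r) : Function.Injective (rankOf r) := by
  intro i j h
  rcases lt_trichotomy (r i) (r j) with hlt | heq | hgt
  · exact absurd h (rankOf_lt_rankOf hlt).ne'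
  · exact hr heq
  · exact absurd h (rankOf_lt_rankOf hgt).ne

theorem image_rankOf (hr : Function.Injective r) : univ.image (rankOf r) = Icc 1 n := by
  refine eq_of_subset_of_card_le (fun m hm => ?_) ?_
  · obtain ⟨i, -, rfl⟩ := mem_image.mp hm
    exact mem_Icc.mpr ⟨one_le_rankOf r i, rankOf_le r i⟩
  · simp [card_image_of_injective _ (rankOf_injective hr)]

theorem card_topk (hr : Function.Injective r) {k : ℕ} (hkn : k ≤ n) : #(topk r k) = k := by
  calc #(topk r k) = #((topk r k).image (rankOf r)) :=
        (card_image_of_injective _ (rankOf_injective hr)).symm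
    _ = #((Icc 1 n).filter (· ≤ k)) := by rw [← image_rankOf hr, filter_image]; rfl
    _ = #(Icc 1 k) := by
        congr 1
        ext m
        simp only [mem_filter, mem_Icc]
        omega
    _ = k := by simp

theorem card_topk_inter_topk_le_of_rankOf_eq {rv : Fin n → ℝ} (hr : Function.Injective r)
    (hrev : ∀ x, rankOf rv x = n + 1 - rankOf r x) (k : ℕ) :
    #(topk r k ∩ topk rv k) ≤ 2 * k - n := by
  have : #(topk r k ∩ topk rv k) ≤ #(Icc (n + 1 - k) k) := by
    refine card_le_card_of_injOn (rankOf r) (fun x hx => ?_)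
      (fun a _ b _ h => rankOf_injective hr h)
    simp only [coe_inter, Set.mem_inter_iff, topk, coe_filter, mem_univ, true_and,
      Set.mem_ofPred_eq, hrev] at hx
    have := rankOf_le r x
    simp only [coe_Icc, Set.mem_Icc]
    omega
  rw [Nat.card_Icc] at this
  omega

end Ranking

theorem jaccard_curve_above_reversal_general {n : ℕ} (r s rv : Fin n → ℝ)
    (hr : Function.Injective r) (hs : Function.Injective s)
    (hrv : Function.Injective rv)
    (hrev : ∀ x, rankOf rv x = n + 1 - rankOf r x)
    (k : ℕ) (hkn : k ≤ n) :
    jac r rv k ≤ jac r s k := by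
  have hA := card_topk hr hkn
  have hB := card_topk hs hkn
  have hC := card_topk hrv hkn
  have hlower := card_add_card_sub_card_le_card_inter (topk r k) (topk s k)
  have hupper := card_topk_inter_topk_le_of_rankOf_eq hr hrev k
  rw [hA, hB, Fintype.card_fin] at hlower
  exact card_inter_div_card_union_le_of_card_eq (hC.trans hA.symm) (hB.trans hA.symm)
    (by omega)

theorem jaccard_curve_above_reversal {n : ℕ} (r s rv : Fin n → ℝ)
    (hr : Function.Injective r) (hs : Function.Injective s)
    (hrv : Function.Injective rv)
    (hrev : ∀ x, rankOf rv x = n + 1 - rankOf r x)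
    (k : ℕ) (hk1 : 1 ≤ k) (hkn : k ≤ n) :
    jac r rv k ≤ jac r s k :=
  jaccard_curve_above_reversal_general r s rv hr hs hrv hrev k hkn
end

section
/- For any two rankings r, s of n items with strictly positive scores and any cutoff k, the fuzzy Jaccard index satisfies FUJI(r,s,k) ≥ J(r,s,k), i.e., the Fuzzy Jaccard Index is bounded below by the ordinary Jaccard index. -/
open Finset Filter
open scoped Classical

/-! Every membership degree lies in `[0, 1]`, and each item of `U = Top_k(r) ∪ Top_k(s)` has degree
`1` in at least one of the two rankings, so the denominator of FUJI is exactly `|U|`. Items of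
`Top_k(r) ∩ Top_k(s)` contribute `1` to the numerator and all others contribute a non-negative
amount, so the numerator is at least `|Top_k(r) ∩ Top_k(s)|`. -/

section FuzzyMembership

variable {n : ℕ} (r : Fin n → ℝ) (k : ℕ)

theorem rankOf_le_rankOf {i j : Fin n} (h : r j ≤ r i) : rankOf r i ≤ rankOf r j :=
  Finset.card_le_card fun _ hx => by
    simp only [Finset.mem_filter] at hx ⊢
    exact ⟨hx.1, h.trans hx.2⟩

theorem mem_topk_of_le {a i : Fin n} (ha : a ∈ topk r k) (h : r a ≤ r i) : i ∈ topk r k := by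
  simp only [topk, Finset.mem_filter, Finset.mem_univ, true_and] at ha ⊢
  exact (rankOf_le_rankOf r h).trans ha

theorem le_kthScore_of_notMem_topk (h : (topk r k).Nonempty) {i : Fin n} (hi : i ∉ topk r k) :
    r i ≤ kthScore r k := by
  rw [kthScore, dif_pos h]
  exact Finset.le_inf' h r fun a ha => le_of_not_ge fun hai => hi (mem_topk_of_le r k ha hai)

variable {r}

theorem kthScore_nonneg (hr : ∀ i, 0 ≤ r i) : 0 ≤ kthScore r k := by
  unfold kthScore
  split_ifs with h
  · exact Finset.le_inf' h r fun a _ => hr a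
  · exact le_rfl

theorem fmu_of_mem_topk {i : Fin n} (hi : i ∈ topk r k) : fmu r k i = 1 := if_pos hi

theorem fmu_nonneg (hr : ∀ i, 0 ≤ r i) (i : Fin n) : 0 ≤ fmu r k i := by
  unfold fmu
  split_ifs
  · exact zero_le_one
  · exact div_nonneg (hr i) (kthScore_nonneg k hr)

theorem fmu_le_one (hr : ∀ i, 0 ≤ r i) (i : Fin n) : fmu r k i ≤ 1 := by
  unfold fmu
  split_ifs with hi
  · exact le_rfl
  by_cases h : (topk r k).Nonempty
  · exact div_le_one_of_le₀ (le_kthScore_of_notMem_topk r k h hi) (kthScore_nonneg k hr)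
  · -- with an empty top-k the threshold is the junk value `0`, and `r i / 0 = 0`
    rw [kthScore, dif_neg h, div_zero]
    exact zero_le_one

end FuzzyMembership

section SumBounds

variable {n : ℕ} {r s : Fin n → ℝ} (k : ℕ)

theorem sum_max_fmu_eq_card (hr : ∀ i, 0 ≤ r i) (hs : ∀ i, 0 ≤ s i) :
    ∑ x ∈ topk r k ∪ topk s k, max (fmu r k x) (fmu s k x) = #(topk r k ∪ topk s k) := by
  rw [Finset.card_eq_sum_ones, Nat.cast_sum, Nat.cast_one]
  refine Finset.sum_congr rfl fun x hx => ?_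
  rcases Finset.mem_union.mp hx with hx | hx
  · rw [fmu_of_mem_topk k hx, max_eq_left (fmu_le_one k hs x)]
  · rw [fmu_of_mem_topk k hx, max_eq_right (fmu_le_one k hr x)]

theorem card_inter_le_sum_min_fmu (hr : ∀ i, 0 ≤ r i) (hs : ∀ i, 0 ≤ s i) :
    (#(topk r k ∩ topk s k) : ℝ) ≤
      ∑ x ∈ topk r k ∪ topk s k, min (fmu r k x) (fmu s k x) :=
  calc (#(topk r k ∩ topk s k) : ℝ)
      = ∑ x ∈ topk r k ∩ topk s k, min (fmu r k x) (fmu s k x) := by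
        rw [Finset.card_eq_sum_ones, Nat.cast_sum, Nat.cast_one]
        refine Finset.sum_congr rfl fun x hx => ?_
        rw [Finset.mem_inter] at hx
        rw [fmu_of_mem_topk k hx.1, fmu_of_mem_topk k hx.2, min_self]
    _ ≤ ∑ x ∈ topk r k ∪ topk s k, min (fmu r k x) (fmu s k x) :=
        Finset.sum_le_sum_of_subset_of_nonneg Finset.inter_subset_union fun x _ _ =>
          le_min (fmu_nonneg k hr x) (fmu_nonneg k hs x)

end SumBounds

theorem fuji_ge_jaccard_general {n : ℕ} (r s : Fin n → ℝ)
    (hrpos : ∀ i, 0 < r i) (hspos : ∀ i, 0 < s i)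
    (k : ℕ) :
    jac r s k ≤ fuji r s k := by
  have hr : ∀ i, 0 ≤ r i := fun i => (hrpos i).le
  have hs : ∀ i, 0 ≤ s i := fun i => (hspos i).le
  rw [jac, fuji, sum_max_fmu_eq_card k hr hs]
  exact div_le_div_of_nonneg_right (card_inter_le_sum_min_fmu k hr hs) (Nat.cast_nonneg _)

theorem fuji_ge_jaccard {n : ℕ} (r s : Fin n → ℝ)
    (hr : Function.Injective r) (hs : Function.Injective s)
    (hrpos : ∀ i, 0 < r i) (hspos : ∀ i, 0 < s i)
    (k : ℕ) (hk1 : 1 ≤ k) (hkn : k ≤ n) :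
    jac r s k ≤ fuji r s k :=
  fuji_ge_jaccard_general r s hrpos hspos k
end

section
/- With rankings r = (1, 1/2, 1/3), s_ε = (1 − 2ε, 1 − ε, 1), and t_α = (α, 1, α²) on three items: lim_{ε→0⁺} FUJI(r, s_ε, 1) = 2/3, lim_{ε→0⁺} FUJI(r, s_ε, 2) = 8/9, lim_{α→∞} FUJI(r, t_α, 1) = 1/6, and lim_{α→∞} FUJI(r, t_α, 2) = 5/9; hence for small enough ε > 0 and large enough α, FUJI(r, s_ε, k) > FUJI(r, t_α, k) for k = 1, 2, even though s_ε exactly reverses r while t_α does not. -/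
open Finset Filter
open scoped Classical

/-
When both rankings are strictly ordered, Top_k consists of the k best items and every other
item has membership (its score) / (k-th largest score) < 1. On U = Top_k(r) ∪ Top_k(s) one of
the two memberships is then 1 and the other is at most 1, so min is their product and max is 1:
FUJI is the average over U of the product of the memberships. For the rankings at hand this is
an explicit rational function of ε (resp. α), and the limits follow by continuity; ε = 1/4 and
α = 3 witness the strict inequalities.
-/

section StrictlyOrdered

variable {n : ℕ} {r : Fin n → ℝ} {σ : Fin n → Fin n}

theorem bijective_of_strictAnti_comp (hσ : StrictAnti (r ∘ σ)) : Function.Bijective σ :=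
  Finite.injective_iff_bijective.1 hσ.injective.of_comp

theorem rankOf_apply_of_strictAnti (hσ : StrictAnti (r ∘ σ)) (m : Fin n) :
    rankOf r (σ m) = m + 1 := by
  rw [rankOf, ← Fin.card_Iic m]
  refine (card_bijective σ (bijective_of_strictAnti_comp hσ) fun i => ?_).symm
  simpa using (hσ.le_iff_ge (a := m) (b := i)).symm

theorem mem_topk_succ_iff_of_strictAnti (hσ : StrictAnti (r ∘ σ)) (i j : Fin n) :
    j ∈ topk r (i + 1) ↔ r (σ i) ≤ r j := by
  obtain ⟨m, rfl⟩ := (bijective_of_strictAnti_comp hσ).2 j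
  simp only [topk, mem_filter, mem_univ, true_and, rankOf_apply_of_strictAnti hσ,
    add_le_add_iff_right, Fin.val_fin_le]
  exact (hσ.le_iff_ge (a := i) (b := m)).symm

theorem kthScore_succ_of_strictAnti (hσ : StrictAnti (r ∘ σ)) (i : Fin n) :
    kthScore r (i + 1) = r (σ i) := by
  have hi : σ i ∈ topk r (i + 1) := (mem_topk_succ_iff_of_strictAnti hσ i _).2 le_rfl
  rw [kthScore, dif_pos ⟨_, hi⟩]
  exact le_antisymm (inf'_le _ hi)
    (le_inf' _ _ fun j hj => (mem_topk_succ_iff_of_strictAnti hσ i j).1 hj)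

theorem fmu_succ_of_strictAnti (hσ : StrictAnti (r ∘ σ)) (i j : Fin n) :
    fmu r (i + 1) j = if r (σ i) ≤ r j then 1 else r j / r (σ i) := by
  simp only [fmu, mem_topk_succ_iff_of_strictAnti hσ, kthScore_succ_of_strictAnti hσ]

theorem fmu_succ_le_one_of_strictAnti (hσ : StrictAnti (r ∘ σ)) {i : Fin n}
    (hpos : 0 < r (σ i)) (j : Fin n) : fmu r (i + 1) j ≤ 1 := by
  rw [fmu_succ_of_strictAnti hσ]
  split_ifs with h
  · exact le_rfl
  · exact (div_le_one hpos).2 (not_le.1 h).le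

end StrictlyOrdered

theorem fuji_eq_sum_mul_div_card {n : ℕ} {r s : Fin n → ℝ} {k : ℕ}
    (hr : ∀ x, fmu r k x ≤ 1) (hs : ∀ x, fmu s k x ≤ 1) :
    fuji r s k = (∑ x ∈ topk r k ∪ topk s k, fmu r k x * fmu s k x) /
      #(topk r k ∪ topk s k) := by
  have key : ∀ x ∈ topk r k ∪ topk s k,
      min (fmu r k x) (fmu s k x) = fmu r k x * fmu s k x ∧
        max (fmu r k x) (fmu s k x) = 1 := by
    intro x hx
    rcases mem_union.1 hx with h | h
    · rw [fmu, if_pos h, one_mul]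
      exact ⟨min_eq_right (hs x), max_eq_left (hs x)⟩
    · have : fmu s k x = 1 := by rw [fmu, if_pos h]
      rw [this, mul_one]
      exact ⟨min_eq_left (hr x), max_eq_right (hr x)⟩
  rw [fuji, sum_congr rfl fun x hx => (key x hx).1, sum_congr rfl fun x hx => (key x hx).2]
  simp

theorem strictAnti_r : StrictAnti (![1, 1/2, (1:ℝ)/3] ∘ ![0, 1, 2]) := by
  simp [Fin.strictAnti_iff_succ_lt, Fin.forall_fin_two]
  norm_num

theorem strictAnti_s {ε : ℝ} (hε : 0 < ε) :
    StrictAnti (![1 - 2*ε, 1 - ε, (1:ℝ)] ∘ ![(2 : Fin 3), 1, 0]) := by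
  simp [Fin.strictAnti_iff_succ_lt, Fin.forall_fin_two]
  constructor <;> linarith

theorem strictAnti_t {α : ℝ} (hα : 1 < α) :
    StrictAnti (![α, 1, α^2] ∘ ![(2 : Fin 3), 0, 1]) := by
  simp [Fin.strictAnti_iff_succ_lt, Fin.forall_fin_two]
  constructor <;> nlinarith

theorem topk_r_one : topk ![1, 1/2, (1:ℝ)/3] 1 = {0} := by
  ext j
  have h : j ∈ topk _ 1 ↔ _ := mem_topk_succ_iff_of_strictAnti strictAnti_r 0 j
  rw [h]
  fin_cases j <;> norm_num

theorem topk_r_two : topk ![1, 1/2, (1:ℝ)/3] 2 = {0, 1} := by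
  ext j
  have h : j ∈ topk _ 2 ↔ _ := mem_topk_succ_iff_of_strictAnti strictAnti_r 1 j
  rw [h]
  fin_cases j <;> norm_num

theorem fmu_r_one : fmu ![1, 1/2, (1:ℝ)/3] 1 = ![1, 1/2, 1/3] := by
  funext j
  have h : fmu _ 1 j = _ := fmu_succ_of_strictAnti strictAnti_r 0 j
  rw [h]
  fin_cases j <;> norm_num

theorem fmu_r_two : fmu ![1, 1/2, (1:ℝ)/3] 2 = ![1, 1, 2/3] := by
  funext j
  have h : fmu _ 2 j = _ := fmu_succ_of_strictAnti strictAnti_r 1 j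
  rw [h]
  fin_cases j <;> norm_num

theorem topk_s_one {ε : ℝ} (hε : 0 < ε) : topk ![1 - 2*ε, 1 - ε, (1:ℝ)] 1 = {2} := by
  ext j
  have h : j ∈ topk _ 1 ↔ _ := mem_topk_succ_iff_of_strictAnti (strictAnti_s hε) 0 j
  rw [h]
  fin_cases j <;> simp <;> linarith

theorem topk_s_two {ε : ℝ} (hε : 0 < ε) :
    topk ![1 - 2*ε, 1 - ε, (1:ℝ)] 2 = {1, 2} := by
  ext j
  have h : j ∈ topk _ 2 ↔ _ := mem_topk_succ_iff_of_strictAnti (strictAnti_s hε) 1 j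
  rw [h]
  fin_cases j <;> simp <;> linarith

theorem fmu_s_one {ε : ℝ} (hε : 0 < ε) :
    fmu ![1 - 2*ε, 1 - ε, (1:ℝ)] 1 = ![1 - 2*ε, 1 - ε, 1] := by
  funext j
  have h : fmu _ 1 j = _ := fmu_succ_of_strictAnti (strictAnti_s hε) 0 j
  rw [h]
  fin_cases j <;> simp <;> intro <;> linarith

theorem fmu_s_two {ε : ℝ} (hε : 0 < ε) :
    fmu ![1 - 2*ε, 1 - ε, (1:ℝ)] 2 = ![(1 - 2*ε) / (1 - ε), 1, 1] := by
  funext j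
  have h : fmu _ 2 j = _ := fmu_succ_of_strictAnti (strictAnti_s hε) 1 j
  rw [h]
  fin_cases j <;> simp <;> intro <;> linarith

theorem topk_t_one {α : ℝ} (hα : 1 < α) : topk ![α, 1, α^2] 1 = {2} := by
  ext j
  have h : j ∈ topk _ 1 ↔ _ := mem_topk_succ_iff_of_strictAnti (strictAnti_t hα) 0 j
  rw [h]
  fin_cases j <;> simp <;> nlinarith [le_abs_self α]

theorem topk_t_two {α : ℝ} (hα : 1 < α) : topk ![α, 1, α^2] 2 = {0, 2} := by
  ext j
  have h : j ∈ topk _ 2 ↔ _ := mem_topk_succ_iff_of_strictAnti (strictAnti_t hα) 1 j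
  rw [h]
  fin_cases j <;> simp <;> nlinarith [le_abs_self α]

theorem fmu_t_one {α : ℝ} (hα : 1 < α) :
    fmu ![α, 1, α^2] 1 = ![α⁻¹, (α^2)⁻¹, 1] := by
  funext j
  have h : fmu _ 1 j = _ := fmu_succ_of_strictAnti (strictAnti_t hα) 0 j
  have h₁ : ¬ α^2 ≤ α := by nlinarith
  have h₂ : ¬ α^2 ≤ 1 := by nlinarith
  rw [h]
  fin_cases j <;> simp [h₁, h₂, -sq_le_one_iff_abs_le_one]
  field_simp

theorem fmu_t_two {α : ℝ} (hα : 1 < α) : fmu ![α, 1, α^2] 2 = ![1, α⁻¹, 1] := by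
  funext j
  have h : fmu _ 2 j = _ := fmu_succ_of_strictAnti (strictAnti_t hα) 1 j
  have h₁ : α ≤ α^2 := by nlinarith
  rw [h]
  fin_cases j <;> simp [h₁, hα.not_ge]

theorem fuji_r_s_one {ε : ℝ} (hε : 0 < ε) :
    fuji ![1, 1/2, (1:ℝ)/3] ![1 - 2*ε, 1 - ε, 1] 1 = (1 - 2*ε + 1/3) / 2 := by
  have hr : ∀ j, fmu _ 1 j ≤ 1 := fmu_succ_le_one_of_strictAnti strictAnti_r (i := 0) (by simp)
  have hs : ∀ j, fmu _ 1 j ≤ 1 :=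
    fmu_succ_le_one_of_strictAnti (strictAnti_s hε) (i := 0) (by simp)
  rw [fuji_eq_sum_mul_div_card hr hs, topk_r_one, topk_s_one hε, fmu_r_one, fmu_s_one hε]
  simp [sum_insert]

theorem fuji_r_s_two {ε : ℝ} (hε : 0 < ε) (hε' : ε < 1) :
    fuji ![1, 1/2, (1:ℝ)/3] ![1 - 2*ε, 1 - ε, 1] 2 = ((1 - 2*ε) / (1 - ε) + 1 + 2/3) / 3 := by
  have hr : ∀ j, fmu _ 2 j ≤ 1 := fmu_succ_le_one_of_strictAnti strictAnti_r (i := 1) (by simp)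
  have hs : ∀ j, fmu _ 2 j ≤ 1 :=
    fmu_succ_le_one_of_strictAnti (strictAnti_s hε) (i := 1) (by simpa using hε')
  rw [fuji_eq_sum_mul_div_card hr hs, topk_r_two, topk_s_two hε, fmu_r_two, fmu_s_two hε]
  simp [sum_insert]
  ring

theorem fuji_r_t_one {α : ℝ} (hα : 1 < α) :
    fuji ![1, 1/2, (1:ℝ)/3] ![α, 1, α^2] 1 = (α⁻¹ + 1/3) / 2 := by
  have hr : ∀ j, fmu _ 1 j ≤ 1 := fmu_succ_le_one_of_strictAnti strictAnti_r (i := 0) (by simp)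
  have ht : ∀ j, fmu _ 1 j ≤ 1 :=
    fmu_succ_le_one_of_strictAnti (strictAnti_t hα) (i := 0) (by simp; positivity)
  rw [fuji_eq_sum_mul_div_card hr ht, topk_r_one, topk_t_one hα, fmu_r_one, fmu_t_one hα]
  simp [sum_insert]

theorem fuji_r_t_two {α : ℝ} (hα : 1 < α) :
    fuji ![1, 1/2, (1:ℝ)/3] ![α, 1, α^2] 2 = (1 + α⁻¹ + 2/3) / 3 := by
  have hr : ∀ j, fmu _ 2 j ≤ 1 := fmu_succ_le_one_of_strictAnti strictAnti_r (i := 1) (by simp)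
  have ht : ∀ j, fmu _ 2 j ≤ 1 :=
    fmu_succ_le_one_of_strictAnti (strictAnti_t hα) (i := 1) (by simp; linarith)
  rw [fuji_eq_sum_mul_div_card hr ht, topk_r_two, topk_t_two hα, fmu_r_two, fmu_t_two hα]
  simp [sum_insert]
  ring

theorem tendsto_fuji_r_s_one :
    Tendsto (fun ε : ℝ => fuji ![1, 1/2, (1:ℝ)/3] ![1 - 2*ε, 1 - ε, 1] 1)
      (nhdsWithin 0 (Set.Ioi 0)) (nhds (2/3)) := by
  refine Tendsto.congr' (eventually_nhdsWithin_of_forall fun ε hε => (fuji_r_s_one hε).symm) ?_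
  refine tendsto_nhdsWithin_of_tendsto_nhds ?_
  have : ContinuousAt (fun ε : ℝ => (1 - 2*ε + 1/3) / 2) 0 := by fun_prop
  convert this.tendsto using 2
  norm_num

theorem tendsto_fuji_r_s_two :
    Tendsto (fun ε : ℝ => fuji ![1, 1/2, (1:ℝ)/3] ![1 - 2*ε, 1 - ε, 1] 2)
      (nhdsWithin 0 (Set.Ioi 0)) (nhds (8/9)) := by
  have hε : ∀ᶠ ε : ℝ in nhdsWithin 0 (Set.Ioi 0), ε ∈ Set.Ioo 0 1 :=
    Ioo_mem_nhdsGT one_pos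
  refine Tendsto.congr' (hε.mono fun ε h => (fuji_r_s_two h.1 h.2).symm) ?_
  refine tendsto_nhdsWithin_of_tendsto_nhds ?_
  have : ContinuousAt (fun ε : ℝ => ((1 - 2*ε) / (1 - ε) + 1 + 2/3) / 3) 0 := by
    fun_prop (disch := norm_num)
  convert this.tendsto using 2
  norm_num

theorem tendsto_fuji_r_t_one :
    Tendsto (fun α : ℝ => fuji ![1, 1/2, (1:ℝ)/3] ![α, 1, α^2] 1) atTop (nhds (1/6)) := by
  refine Tendsto.congr' ((eventually_gt_atTop 1).mono fun α h => (fuji_r_t_one h).symm) ?_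
  convert (tendsto_inv_atTop_zero.add_const (1/3 : ℝ)).div_const (2 : ℝ) using 2
  norm_num

theorem tendsto_fuji_r_t_two :
    Tendsto (fun α : ℝ => fuji ![1, 1/2, (1:ℝ)/3] ![α, 1, α^2] 2) atTop (nhds (5/9)) := by
  refine Tendsto.congr' ((eventually_gt_atTop 1).mono fun α h => (fuji_r_t_two h).symm) ?_
  convert ((tendsto_inv_atTop_zero.const_add 1).add_const (2/3 : ℝ)).div_const (3 : ℝ) using 2
  norm_num

theorem fuji_three_item_limits :
    Filter.Tendsto (fun ε : ℝ => fuji ![1, 1/2, 1/3] ![1 - 2*ε, 1 - ε, 1] 1)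
      (nhdsWithin 0 (Set.Ioi 0)) (nhds (2/3)) ∧
    Filter.Tendsto (fun ε : ℝ => fuji ![1, 1/2, 1/3] ![1 - 2*ε, 1 - ε, 1] 2)
      (nhdsWithin 0 (Set.Ioi 0)) (nhds (8/9)) ∧
    Filter.Tendsto (fun α : ℝ => fuji ![1, 1/2, 1/3] ![α, 1, α^2] 1)
      Filter.atTop (nhds (1/6)) ∧
    Filter.Tendsto (fun α : ℝ => fuji ![1, 1/2, 1/3] ![α, 1, α^2] 2)
      Filter.atTop (nhds (5/9)) ∧
    ∃ ε : ℝ, 0 < ε ∧ ε < 1/2 ∧ ∃ α : ℝ, 1 < α ∧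
      ∀ k ∈ ({1, 2} : Set ℕ),
        fuji ![1, 1/2, 1/3] ![α, 1, α^2] k
          < fuji ![1, 1/2, 1/3] ![1 - 2*ε, 1 - ε, 1] k := by
  refine ⟨tendsto_fuji_r_s_one, tendsto_fuji_r_s_two, tendsto_fuji_r_t_one, tendsto_fuji_r_t_two,
    1/4, by norm_num, by norm_num, 3, by norm_num, ?_⟩
  rintro k (rfl | rfl)
  · rw [fuji_r_t_one (by norm_num), fuji_r_s_one (by norm_num)]
    norm_num
  · rw [fuji_r_t_two (by norm_num), fuji_r_s_two (by norm_num) (by norm_num)]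
    norm_num
end

section
/- For the three-part rankings on n items (n even): r orders items x₁,…,x_n; s orders items x_{n/2+1},…,x_n, x₁,…,x_{n/2}; t orders items x_n, x_{n−1},…,x₁ (the full reversal). Then for every cutoff k, J(r, s, k) = J(r, t, k). -/
open Finset Filter
open scoped Classical

/-!
The rank formulas make every top-`k` set an interval of indices, or for `s` a union of two.
Those of `s` and `t` both have `k` elements and meet the top-`k` set of `r` in `2k - n`
elements (truncated at `0`), and the Jaccard index of two top-`k` lists is determined by these
three counts.
-/

lemma card_filter_univ_fin_val {n : ℕ} (p : ℕ → Prop) [DecidablePred p] :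
    (univ.filter fun i : Fin n => p i.val).card = ((range n).filter p).card := by
  rw [← Nat.Iio_eq_range, ← Fin.map_valEmbedding_univ, filter_map, card_map]
  rfl

lemma card_topk_inter_of_rankOf_eq {n k : ℕ} {r s : Fin n → ℝ} {f g : ℕ → ℕ}
    (hr : ∀ i, rankOf r i = f i.val) (hs : ∀ i, rankOf s i = g i.val) :
    (topk r k ∩ topk s k).card = ((range n).filter fun i => f i ≤ k ∧ g i ≤ k).card := by
  rw [← card_filter_univ_fin_val, topk, topk, ← filter_and]
  simp only [hr, hs]

lemma card_topk_of_rankOf_eq {n k : ℕ} {r : Fin n → ℝ} {f : ℕ → ℕ}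
    (hr : ∀ i, rankOf r i = f i.val) :
    (topk r k).card = ((range n).filter fun i => f i ≤ k).card := by
  rw [← inter_self (topk r k), card_topk_inter_of_rankOf_eq hr hr]
  simp only [and_self]

lemma jac_eq_jac_of_card_eq {n k : ℕ} {r s t : Fin n → ℝ}
    (hst : (topk s k).card = (topk t k).card)
    (hinter : (topk r k ∩ topk s k).card = (topk r k ∩ topk t k).card) :
    jac r s k = jac r t k := by
  have hs := card_union_add_card_inter (topk r k) (topk s k)
  have ht := card_union_add_card_inter (topk r k) (topk t k)
  unfold jac
  rw [hinter, show (topk r k ∪ topk s k).card = (topk r k ∪ topk t k).card by omega]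

section Counting

variable {h k : ℕ}

lemma card_filter_range_sub_le {n : ℕ} (hk : k ≤ n) :
    ((range n).filter fun i => n - i ≤ k).card = k := by
  rw [show (range n).filter (fun i => n - i ≤ k) = Ico (n - k) n by ext i; simp; omega,
    Nat.card_Ico]
  omega

lemma card_filter_range_succ_le_and_sub_le {n : ℕ} (hk : k ≤ n) :
    ((range n).filter fun i => i + 1 ≤ k ∧ n - i ≤ k).card = 2 * k - n := by
  rw [show (range n).filter (fun i => i + 1 ≤ k ∧ n - i ≤ k) = Ico (n - k) k by
    ext i; simp; omega, Nat.card_Ico]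
  omega

lemma card_filter_range_rotate_le (hk : k ≤ h + h) :
    ((range (h + h)).filter fun i => (if h ≤ i then i - h + 1 else i + h + 1) ≤ k).card
      = k := by
  have hsplit : (range (h + h)).filter (fun i => (if h ≤ i then i - h + 1 else i + h + 1) ≤ k)
      = Ico h (min (k + h) (h + h)) ∪ range (k - h) := by
    ext i
    simp only [mem_filter, mem_range, mem_union, mem_Ico, lt_min_iff]
    split_ifs <;> omega
  rw [hsplit, card_union_of_disjoint, Nat.card_Ico, card_range]
  · omega
  · exact disjoint_left.2 fun i hi hi' => by simp at hi hi'; omega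

lemma card_filter_range_succ_le_and_rotate_le (hk : k ≤ h + h) :
    ((range (h + h)).filter fun i =>
      i + 1 ≤ k ∧ (if h ≤ i then i - h + 1 else i + h + 1) ≤ k).card = 2 * k - (h + h) := by
  have hsplit : (range (h + h)).filter
      (fun i => i + 1 ≤ k ∧ (if h ≤ i then i - h + 1 else i + h + 1) ≤ k)
      = Ico h k ∪ range (k - h) := by
    ext i
    simp only [mem_filter, mem_range, mem_union, mem_Ico]
    split_ifs <;> omega
  rw [hsplit, card_union_of_disjoint, Nat.card_Ico, card_range]
  · omega
  · exact disjoint_left.2 fun i hi hi' => by simp at hi hi'; omega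

end Counting

theorem two_part_ranking_jaccard_eq_general {n : ℕ} (hn : Even n)
    (r s t : Fin n → ℝ)
    (hrrank : ∀ i : Fin n, rankOf r i = i.val + 1)
    (hsrank : ∀ i : Fin n, rankOf s i =
      if n / 2 ≤ i.val then i.val - n / 2 + 1 else i.val + n / 2 + 1)
    (htrank : ∀ i : Fin n, rankOf t i = n - i.val) :
    ∀ k, 1 ≤ k → k ≤ n → jac r s k = jac r t k := by
  intro k _ hk
  obtain ⟨h, rfl⟩ := hn
  rw [show (h + h) / 2 = h by omega] at hsrank
  apply jac_eq_jac_of_card_eq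
  · rw [card_topk_of_rankOf_eq (f := fun i => if h ≤ i then i - h + 1 else i + h + 1) hsrank,
      card_topk_of_rankOf_eq (f := fun i => h + h - i) htrank,
      card_filter_range_rotate_le hk, card_filter_range_sub_le hk]
  · rw [card_topk_inter_of_rankOf_eq (f := fun i => i + 1)
        (g := fun i => if h ≤ i then i - h + 1 else i + h + 1) hrrank hsrank,
      card_topk_inter_of_rankOf_eq (f := fun i => i + 1) (g := fun i => h + h - i) hrrank htrank,
      card_filter_range_succ_le_and_rotate_le hk, card_filter_range_succ_le_and_sub_le hk]

theorem two_part_ranking_jaccard_eq {n : ℕ} (hn : Even n) (hpos : 0 < n)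
    (r s t : Fin n → ℝ)
    (hr : Function.Injective r) (hs : Function.Injective s)
    (ht : Function.Injective t)
    (hrrank : ∀ i : Fin n, rankOf r i = i.val + 1)
    (hsrank : ∀ i : Fin n, rankOf s i =
      if n / 2 ≤ i.val then i.val - n / 2 + 1 else i.val + n / 2 + 1)
    (htrank : ∀ i : Fin n, rankOf t i = n - i.val) :
    ∀ k, 1 ≤ k → k ≤ n → jac r s k = jac r t k :=
  two_part_ranking_jaccard_eq_general hn r s t hrrank hsrank htrank
end
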